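/- Let k ≥ 2 and f : ℕ → ℂ with ∑ |f(n)|/n^k < ∞. Then (1/(x(log x)^{k-1})) ∑_{n₁⋯n_k ≤ x} f(gcd(n₁,…,n_k)) converges to (1/((k-1)! ζ(k))) ∑_{n=1}^∞ f(n)/n^k as x → ∞. -/

import Mathlib

/-!
Write `f = 1 ⋆ g` with `g = μ ⋆ f`. Since the tuples whose gcd is divisible by `d` are `d` times
the tuples with product at most `N / d^k`, swapping sums turns the sum over tuples with product at
most `N` into `∑_d g(d) D_k(N / d^k)`, where `D_k(N)` counts the `k`-tuples with product
at most `N`.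

From `D_{k+1}(N) = ∑_{d ≤ N} D_k(N / d)` and a comparison of `∑_{d ≤ y} log(y/d)^j / d` with
`∫_1^y log(y/t)^j / t dt = log^{j+1} y / (j+1)`, induction on `k` gives
`D_k(y) = y log^{k-1} y / (k-1)! + O(y log^{k-2} y)`. After dividing by `x log^{k-1} x`, the `d`-th
term tends to `g(d) / (d^k (k-1)!)` and is bounded by `C |g(d)| / d^k`, which is summable along with
`|f(n)| / n^k`. Dominated convergence and `∑ g(d) / d^k = (∑ f(n) / n^k) / ζ(k)` finish the proof.
-/

open Finset Filter

noncomputable section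

/-- The set of ordered `k`-tuples of positive integers with product `n`. -/
def tuplesProd (k n : ℕ) : Finset (Fin k → ℕ) :=
  (Fintype.piFinset fun _ => n.divisors).filter fun v => ∏ i, v i = n

lemma mem_tuplesProd {k n : ℕ} {v : Fin k → ℕ} : v ∈ tuplesProd k n ↔ ∏ i, v i = n ∧ n ≠ 0 := by
  simp only [tuplesProd, mem_filter, Fintype.mem_piFinset, Nat.mem_divisors]
  constructor
  · rintro ⟨hdvd, rfl⟩
    refine ⟨rfl, fun h0 => ?_⟩
    obtain ⟨i, -, hi⟩ := Finset.prod_eq_zero_iff.mp h0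
    exact (hdvd i).2 h0
  · rintro ⟨rfl, h0⟩
    exact ⟨fun i => ⟨Finset.dvd_prod_of_mem v (mem_univ i), h0⟩, rfl⟩

def tuplesProdLE (k N : ℕ) : Finset (Fin k → ℕ) :=
  (Icc 1 N).biUnion (tuplesProd k)

lemma mem_tuplesProdLE {k N : ℕ} {v : Fin k → ℕ} :
    v ∈ tuplesProdLE k N ↔ ∏ i, v i ∈ Icc 1 N := by
  simp only [tuplesProdLE, mem_biUnion, mem_tuplesProd]
  constructor
  · rintro ⟨n, hn, rfl, -⟩
    exact hn
  · intro h
    exact ⟨_, h, rfl, by simp at h; omega⟩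

lemma mem_Icc_of_mem_tuplesProdLE {k N : ℕ} {v : Fin k → ℕ} (hv : v ∈ tuplesProdLE k N)
    (i : Fin k) : v i ∈ Icc 1 N := by
  rw [mem_tuplesProdLE, mem_Icc] at hv
  have hdvd : v i ∣ ∏ j, v j := dvd_prod_of_mem v (mem_univ i)
  exact mem_Icc.mpr ⟨Nat.pos_of_dvd_of_pos hdvd hv.1, (Nat.le_of_dvd hv.1 hdvd).trans hv.2⟩

lemma sum_tuplesProdLE {M : Type*} [AddCommMonoid M] (k N : ℕ) (h : (Fin k → ℕ) → M) :
    ∑ v ∈ tuplesProdLE k N, h v = ∑ n ∈ Icc 1 N, ∑ v ∈ tuplesProd k n, h v := by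
  refine sum_biUnion fun a _ b _ hab => disjoint_left.mpr fun v ha hb => hab ?_
  exact (mem_tuplesProd.mp ha).1.symm.trans (mem_tuplesProd.mp hb).1

/-- `D_k(N) = ∑_{n ≤ N} d_k(n)`, the summatory function of the `k`-fold divisor function. -/
def divisorSummatory (k N : ℕ) : ℕ := #(tuplesProdLE k N)

@[simp] lemma divisorSummatory_zero_right (k : ℕ) : divisorSummatory k 0 = 0 := by
  simp [divisorSummatory, tuplesProdLE]

lemma divisorSummatory_zero_left {N : ℕ} (hN : 1 ≤ N) : divisorSummatory 0 N = 1 := by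
  rw [divisorSummatory, card_eq_one]
  exact ⟨finZeroElim, eq_singleton_iff_unique_mem.mpr
    ⟨mem_tuplesProdLE.mpr (by simpa using hN), fun v _ => Subsingleton.elim _ _⟩⟩

lemma filter_tuplesProdLE_succ_eq_image {k N d : ℕ} (hd : 0 < d) :
    (tuplesProdLE (k + 1) N).filter (fun v => v 0 = d) =
      (tuplesProdLE k (N / d)).image (Fin.cons d) := by
  ext v
  refine Fin.consCases (fun a w => ?_) v
  simp only [mem_filter, mem_image, mem_tuplesProdLE, Fin.prod_univ_succ, Fin.cons_zero,
    Fin.cons_succ, Fin.cons_inj, mem_Icc, Nat.le_div_iff_mul_le hd]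
  constructor
  · rintro ⟨⟨h1, h2⟩, rfl⟩
    exact ⟨w, ⟨Nat.pos_of_ne_zero fun h => by simp [h] at h1, by linarith⟩,
      rfl, rfl⟩
  · rintro ⟨w, ⟨h1, h2⟩, rfl, rfl⟩
    exact ⟨⟨by nlinarith, by linarith⟩, rfl⟩

lemma divisorSummatory_succ (k N : ℕ) :
    divisorSummatory (k + 1) N = ∑ d ∈ Icc 1 N, divisorSummatory k (N / d) := by
  rw [divisorSummatory, card_eq_sum_card_fiberwise (f := fun v => v 0) (t := Icc 1 N)]
  · refine sum_congr rfl fun d hd => ?_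
    rw [filter_tuplesProdLE_succ_eq_image (mem_Icc.mp hd).1,
      card_image_of_injective _ (Fin.cons_right_injective _), divisorSummatory]
  · exact fun v hv => mem_Icc_of_mem_tuplesProdLE hv 0

lemma divisorSummatory_one (N : ℕ) : divisorSummatory 1 N = N := by
  rw [divisorSummatory_succ, sum_congr rfl fun d hd => divisorSummatory_zero_left
    ((Nat.one_le_div_iff (mem_Icc.mp hd).1).mpr (mem_Icc.mp hd).2)]
  simp

lemma filter_dvd_tuplesProdLE_eq_image {k N d : ℕ} (hd : 0 < d) :
    (tuplesProdLE k N).filter (fun v => ∀ i, d ∣ v i) =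
      (tuplesProdLE k (N / d ^ k)).image (d • ·) := by
  have hprod (w : Fin k → ℕ) : ∏ i, (d • w) i = d ^ k * ∏ i, w i := by
    simp [prod_mul_distrib]
  ext v
  simp only [mem_filter, mem_image, mem_tuplesProdLE, mem_Icc, Nat.le_div_iff_mul_le (pow_pos hd k)]
  constructor
  · rintro ⟨⟨h1, h2⟩, hdvd⟩
    have hv : d • (fun i => v i / d) = v := funext fun i => Nat.mul_div_cancel' (hdvd i)
    rw [← hv, hprod] at h1 h2
    exact ⟨_, ⟨Nat.pos_of_ne_zero fun h => by simp [h] at h1, by linarith⟩, hv⟩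
  · rintro ⟨w, ⟨h1, h2⟩, rfl⟩
    rw [hprod]
    exact ⟨⟨Nat.mul_pos (pow_pos hd k) h1, by linarith⟩, fun i => dvd_mul_right d (w i)⟩

lemma card_filter_dvd_tuplesProdLE {k N d : ℕ} (hd : 0 < d) :
    #((tuplesProdLE k N).filter (fun v => ∀ i, d ∣ v i)) = divisorSummatory k (N / d ^ k) := by
  rw [filter_dvd_tuplesProdLE_eq_image hd,
    card_image_of_injective _ (smul_right_injective _ hd.ne'), divisorSummatory]

lemma sum_gcd_eq_sum_smul {M : Type*} [AddCommMonoid M] {k : ℕ} (hk : k ≠ 0) {f g : ℕ → M}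
    (hfg : ∀ n, 0 < n → f n = ∑ d ∈ n.divisors, g d) (N : ℕ) :
    ∑ v ∈ tuplesProdLE k N, f (univ.gcd v) =
      ∑ d ∈ Icc 1 N, divisorSummatory k (N / d ^ k) • g d := by
  have hgcd {v} (hv : v ∈ tuplesProdLE k N) : univ.gcd v ≠ 0 := fun h0 => by
    have := mem_Icc_of_mem_tuplesProdLE hv ⟨0, Nat.pos_of_ne_zero hk⟩
    simp_all [Finset.gcd_eq_zero_iff]
  calc ∑ v ∈ tuplesProdLE k N, f (univ.gcd v)
      = ∑ v ∈ tuplesProdLE k N, ∑ d ∈ (univ.gcd v).divisors, g d :=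
        sum_congr rfl fun v hv => hfg _ (Nat.pos_of_ne_zero (hgcd hv))
    _ = ∑ d ∈ Icc 1 N, ∑ v ∈ (tuplesProdLE k N).filter (fun v => ∀ i, d ∣ v i), g d := by
        refine sum_comm' fun v d => ?_
        simp only [Nat.mem_divisors, mem_filter, Finset.dvd_gcd_iff, mem_univ, true_imp_iff]
        constructor
        · rintro ⟨hv, hdvd, -⟩
          have hi := mem_Icc.mp (mem_Icc_of_mem_tuplesProdLE hv ⟨0, Nat.pos_of_ne_zero hk⟩)
          have := Nat.le_of_dvd hi.1 (hdvd _)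
          exact ⟨⟨hv, hdvd⟩, mem_Icc.mpr ⟨Nat.pos_of_dvd_of_pos (hdvd _) hi.1, by omega⟩⟩
        · rintro ⟨⟨hv, hdvd⟩, -⟩
          exact ⟨hv, hdvd, hgcd hv⟩
    _ = ∑ d ∈ Icc 1 N, divisorSummatory k (N / d ^ k) • g d :=
        sum_congr rfl fun d hd => by
          rw [sum_const, card_filter_dvd_tuplesProdLE (mem_Icc.mp hd).1]

open Real Topology
open scoped Nat

/-! ## The sums `∑_{d ≤ y} log(y/d)^j / d` -/

lemma hasDerivAt_log_div_pow (j : ℕ) {y t : ℝ} (hy : 0 < y) (ht : 0 < t) :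
    HasDerivAt (fun t => -log (y / t) ^ (j + 1) / (j + 1)) (log (y / t) ^ j / t) t := by
  have hlog : HasDerivAt (fun t => log (y / t)) (-1 / t) t := by
    have hy0 := hy.ne'
    have ht0 := ht.ne'
    convert ((hasDerivAt_inv ht0).const_mul y).log (by positivity) using 1
    · simp only [div_eq_mul_inv]
    · field_simp
  refine ((hlog.pow (j + 1)).neg.div_const ((j : ℝ) + 1)).congr_deriv ?_
  have ht0 := ht.ne'
  push_cast
  field_simp

lemma integral_log_div_pow_div (j : ℕ) {y a b : ℝ} (hy : 0 < y) (ha : 0 < a) (hb : 0 < b) :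
    ∫ t in a..b, log (y / t) ^ j / t =
      (log (y / a) ^ (j + 1) - log (y / b) ^ (j + 1)) / (j + 1) := by
  have hpos {t} (ht : t ∈ Set.uIcc a b) : 0 < t := by
    rcases Set.mem_uIcc.mp ht with h | h <;> linarith [h.1]
  rw [intervalIntegral.integral_eq_sub_of_hasDerivAt
    (fun t ht => hasDerivAt_log_div_pow j hy (hpos ht))]
  · ring
  · refine ContinuousOn.intervalIntegrable fun t ht => ?_
    have := hpos ht
    fun_prop (disch := positivity)

lemma antitoneOn_log_div_pow_div (j : ℕ) (y : ℝ) :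
    AntitoneOn (fun t => log (y / t) ^ j / t) (Set.Icc 1 y) := by
  intro s hs t ht hst
  have hs0 : 0 < s := by linarith [hs.1]
  have ht0 : 0 < t := by linarith [ht.1]
  have hlog : log (y / t) ≤ log (y / s) :=
    log_le_log (div_pos (by linarith [ht.2]) ht0)
      (div_le_div_of_nonneg_left (by linarith [hs.1, hs.2]) hs0 hst)
  exact div_le_div₀ (pow_nonneg (log_nonneg ((one_le_div hs0).mpr hs.2)) j)
    (pow_le_pow_left₀ (log_nonneg ((one_le_div ht0).mpr ht.2)) hlog j) hs0 hst

lemma integral_one_floor_log_div_pow_div (j : ℕ) {y : ℝ} (hy : 1 ≤ y) :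
    ∫ t in ((1 : ℕ) : ℝ)..⌊y⌋₊, log (y / t) ^ j / t =
      (log y ^ (j + 1) - log (y / ⌊y⌋₊) ^ (j + 1)) / (j + 1) := by
  have hN : (0 : ℝ) < ⌊y⌋₊ := Nat.cast_pos.mpr (Nat.le_floor (by exact_mod_cast hy))
  rw [integral_log_div_pow_div j (by linarith) (by simp) hN]
  simp

lemma log_div_floor_mem_Icc {y : ℝ} (hy : 1 ≤ y) : log (y / ⌊y⌋₊) ∈ Set.Icc 0 1 := by
  have hN : (1 : ℝ) ≤ ⌊y⌋₊ := Nat.one_le_cast.mpr (Nat.le_floor (by exact_mod_cast hy))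
  have hNy : (⌊y⌋₊ : ℝ) ≤ y := Nat.floor_le (by linarith)
  have hy2 : y / ⌊y⌋₊ < 2 := (div_lt_iff₀ (by linarith)).mpr (by linarith [Nat.lt_floor_add_one y])
  refine ⟨log_nonneg ((one_le_div (by linarith)).mpr hNy), ?_⟩
  linarith [log_le_sub_one_of_pos (show 0 < y / ⌊y⌋₊ by positivity)]

lemma sum_log_div_pow_div_le (j : ℕ) {y : ℝ} (hy : 1 ≤ y) :
    ∑ d ∈ Icc 1 ⌊y⌋₊, log (y / d) ^ j / d ≤ log y ^ j + log y ^ (j + 1) / (j + 1) := by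
  have hN : 1 ≤ ⌊y⌋₊ := Nat.le_floor (by exact_mod_cast hy)
  have hanti : AntitoneOn (fun t => log (y / t) ^ j / t) (Set.Icc ((1 : ℕ) : ℝ) ⌊y⌋₊) :=
    (antitoneOn_log_div_pow_div j y).mono
      (Set.Icc_subset_Icc Nat.cast_one.ge (Nat.floor_le (by linarith)))
  have hsum := hanti.sum_le_integral_Ico hN
  rw [sum_Ico_add' (fun d : ℕ => log (y / d) ^ j / d), Ico_add_one_add_one_eq_Ioc,
    integral_one_floor_log_div_pow_div j hy, sub_div] at hsum
  rw [← add_sum_Ioc_eq_sum_Icc hN]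
  have := (log_div_floor_mem_Icc hy).1
  have : 0 ≤ log (y / ⌊y⌋₊) ^ (j + 1) / (j + 1) := by positivity
  simp only [Nat.cast_one, div_one]
  linarith

lemma sum_log_div_pow_div_ge (j : ℕ) {y : ℝ} (hy : 1 ≤ y) :
    log y ^ (j + 1) / (j + 1) - 1 ≤ ∑ d ∈ Icc 1 ⌊y⌋₊, log (y / d) ^ j / d := by
  have hN : 1 ≤ ⌊y⌋₊ := Nat.le_floor (by exact_mod_cast hy)
  have hanti : AntitoneOn (fun t => log (y / t) ^ j / t) (Set.Icc ((1 : ℕ) : ℝ) ⌊y⌋₊) :=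
    (antitoneOn_log_div_pow_div j y).mono
      (Set.Icc_subset_Icc Nat.cast_one.ge (Nat.floor_le (by linarith)))
  have hsum := hanti.integral_le_sum_Ico hN
  rw [integral_one_floor_log_div_pow_div j hy, sub_div] at hsum
  have hsub : ∑ d ∈ Ico 1 ⌊y⌋₊, log (y / d) ^ j / d ≤ ∑ d ∈ Icc 1 ⌊y⌋₊, log (y / d) ^ j / d := by
    refine sum_le_sum_of_subset_of_nonneg Ico_subset_Icc_self fun d hd _ => ?_
    have hd := mem_Icc.mp hd
    have hdy : (d : ℝ) ≤ y := (Nat.cast_le.mpr hd.2).trans (Nat.floor_le (by linarith))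
    have := log_nonneg ((one_le_div (Nat.cast_pos.mpr hd.1)).mpr hdy)
    positivity
  have hlogN := log_div_floor_mem_Icc hy
  have : log (y / ⌊y⌋₊) ^ (j + 1) / (j + 1) ≤ 1 := by
    rw [div_le_one (by positivity)]
    linarith [pow_le_one₀ hlogN.1 hlogN.2 (n := j + 1), (Nat.cast_nonneg j : (0 : ℝ) ≤ j)]
  linarith

lemma abs_sum_log_div_pow_div_sub_le (j : ℕ) {y : ℝ} (hy : 1 ≤ y) :
    |∑ d ∈ Icc 1 ⌊y⌋₊, log (y / d) ^ j / d - log y ^ (j + 1) / (j + 1)| ≤ (1 + log y) ^ j := by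
  have hlog : 0 ≤ log y := log_nonneg hy
  have := sum_log_div_pow_div_le j hy
  have := sum_log_div_pow_div_ge j hy
  rw [abs_le]
  constructor
  · nlinarith [one_le_pow₀ (show 1 ≤ 1 + log y by linarith) (n := j)]
  · nlinarith [pow_le_pow_left₀ hlog (show log y ≤ 1 + log y by linarith) j]

lemma sum_inv_le_one_add_log {y : ℝ} (hy : 1 ≤ y) :
    ∑ d ∈ Icc 1 ⌊y⌋₊, (d : ℝ)⁻¹ ≤ 1 + log y := by
  have := harmonic_le_one_add_log ⌊y⌋₊
  simp only [harmonic_eq_sum_Icc, Rat.cast_sum, Rat.cast_inv, Rat.cast_natCast] at this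
  have hN : (0 : ℝ) < ⌊y⌋₊ := Nat.cast_pos.mpr (Nat.le_floor (by exact_mod_cast hy))
  linarith [log_le_log hN (Nat.floor_le (by linarith))]

/-! ## Asymptotics of `D_k` -/

lemma abs_divisorSummatory_succ_sub_le {j : ℕ} {E : ℝ → ℝ}
    (hE : ∀ y ≥ 1, |(divisorSummatory (j + 1) ⌊y⌋₊ : ℝ) - y * log y ^ j / j !| ≤ E y)
    {y : ℝ} (hy : 1 ≤ y) :
    |(divisorSummatory (j + 2) ⌊y⌋₊ : ℝ) - y * log y ^ (j + 1) / (j + 1)!| ≤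
      ∑ d ∈ Icc 1 ⌊y⌋₊, E (y / d) + y * (1 + log y) ^ j := by
  have hy0 : 0 < y := by linarith
  have hD : (divisorSummatory (j + 2) ⌊y⌋₊ : ℝ) =
      ∑ d ∈ Icc 1 ⌊y⌋₊, (divisorSummatory (j + 1) ⌊y / d⌋₊ : ℝ) := by
    simp_rw [divisorSummatory_succ (j + 1), Nat.floor_div_natCast, Nat.cast_sum]
  have hsplit : (divisorSummatory (j + 2) ⌊y⌋₊ : ℝ) - y * log y ^ (j + 1) / (j + 1)! =
      ∑ d ∈ Icc 1 ⌊y⌋₊, ((divisorSummatory (j + 1) ⌊y / d⌋₊ : ℝ) - y / d * log (y / d) ^ j / j !) +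
        y / j ! * (∑ d ∈ Icc 1 ⌊y⌋₊, log (y / d) ^ j / d - log y ^ (j + 1) / (j + 1)) := by
    rw [hD, sum_sub_distrib, mul_sub, mul_sum, Nat.factorial_succ]
    push_cast
    field_simp
    ring
  have hfact : y / j ! ≤ y := div_le_self hy0.le (by exact_mod_cast j.factorial_pos)
  rw [hsplit]
  calc _ ≤ ∑ d ∈ Icc 1 ⌊y⌋₊,
          |(divisorSummatory (j + 1) ⌊y / d⌋₊ : ℝ) - y / d * log (y / d) ^ j / j !|
        + y / j ! * |∑ d ∈ Icc 1 ⌊y⌋₊, log (y / d) ^ j / d - log y ^ (j + 1) / (j + 1)| := by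
        refine (abs_add_le _ _).trans (add_le_add (abs_sum_le_sum_abs _ _) ?_)
        rw [abs_mul, abs_of_nonneg (by positivity)]
    _ ≤ ∑ d ∈ Icc 1 ⌊y⌋₊, E (y / d) + y * (1 + log y) ^ j := by
        gcongr with d hd
        · have hd := mem_Icc.mp hd
          refine hE _ ((one_le_div (Nat.cast_pos.mpr hd.1)).mpr (le_trans ?_ (Nat.floor_le hy0.le)))
          exact_mod_cast hd.2
        · exact abs_sum_log_div_pow_div_sub_le j hy

/-- The induction starts at `j = 1`: the exact `D_1(y) = ⌊y⌋` is needed to get an `O(y)` error for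
`D_2`. -/
theorem abs_divisorSummatory_sub_le {j : ℕ} (hj : 1 ≤ j) {y : ℝ} (hy : 1 ≤ y) :
    |(divisorSummatory (j + 1) ⌊y⌋₊ : ℝ) - y * log y ^ j / j !| ≤
      (j + 1) * y * (1 + log y) ^ (j - 1) := by
  induction j, hj using Nat.le_induction generalizing y with
  | base =>
    have hE (y : ℝ) (hy : 1 ≤ y) :
        |(divisorSummatory 1 ⌊y⌋₊ : ℝ) - y * log y ^ 0 / 0 !| ≤ 1 := by
      rw [divisorSummatory_one, pow_zero, mul_one, Nat.factorial_zero, Nat.cast_one, div_one,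
        abs_sub_comm, abs_of_nonneg (by linarith [Nat.floor_le (by linarith : 0 ≤ y)])]
      linarith [Nat.lt_floor_add_one y]
    have := abs_divisorSummatory_succ_sub_le hE hy
    rw [sum_const, Nat.card_Icc, Nat.add_sub_cancel, nsmul_one] at this
    norm_num at this ⊢
    linarith [Nat.floor_le (by linarith : 0 ≤ y)]
  | succ j hj ih =>
    have hlog : 0 ≤ log y := log_nonneg hy
    refine (abs_divisorSummatory_succ_sub_le (fun z hz => ih hz) hy).trans ?_
    calc ∑ d ∈ Icc 1 ⌊y⌋₊, (j + 1) * (y / d) * (1 + log (y / d)) ^ (j - 1) + y * (1 + log y) ^ j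
        ≤ ∑ d ∈ Icc 1 ⌊y⌋₊, (j + 1) * (y / d) * (1 + log y) ^ (j - 1)
          + y * (1 + log y) ^ j := by
          refine add_le_add_left (sum_le_sum fun d hd => ?_) _
          have hd := mem_Icc.mp hd
          have hdy : 1 ≤ y / d := (one_le_div (Nat.cast_pos.mpr hd.1)).mpr
            ((Nat.cast_le.mpr hd.2).trans (Nat.floor_le (by linarith)))
          gcongr
          · linarith [log_nonneg hdy]
          · exact div_le_self (by linarith) (by exact_mod_cast hd.1)
      _ = (j + 1) * y * (1 + log y) ^ (j - 1) * ∑ d ∈ Icc 1 ⌊y⌋₊, (d : ℝ)⁻¹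
          + y * (1 + log y) ^ j := by
          rw [mul_sum]
          congr 1
          exact sum_congr rfl fun d _ => by ring
      _ ≤ (j + 1) * y * (1 + log y) ^ (j - 1) * (1 + log y) + y * (1 + log y) ^ j := by
          gcongr
          exact sum_inv_le_one_add_log hy
      _ = _ := by
          obtain ⟨i, rfl⟩ : ∃ i, j = i + 1 := ⟨j - 1, by omega⟩
          push_cast
          simp only [pow_succ]
          ring

lemma divisorSummatory_le {k : ℕ} (hk : 2 ≤ k) {y : ℝ} (hy : 1 ≤ y) :
    (divisorSummatory k ⌊y⌋₊ : ℝ) ≤ (k + 1) * y * (1 + log y) ^ (k - 1) := by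
  obtain ⟨j, rfl⟩ : ∃ j, k = j + 1 := ⟨k - 1, by omega⟩
  have hlog : 0 ≤ log y := log_nonneg hy
  have hmain : y * log y ^ j / j ! ≤ y * (1 + log y) ^ j :=
    (div_le_self (by positivity) (by exact_mod_cast j.factorial_pos)).trans
      (by gcongr; linarith)
  have herr : (j + 1) * y * (1 + log y) ^ (j - 1) ≤ (j + 1) * y * (1 + log y) ^ j := by
    gcongr
    · linarith
    · omega
  have := abs_le.mp (abs_divisorSummatory_sub_le (j := j) (by omega) hy)
  push_cast
  linarith

lemma tendsto_divisorSummatory_div {k : ℕ} (hk : 2 ≤ k) :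
    Tendsto (fun y => (divisorSummatory k ⌊y⌋₊ : ℝ) / (y * log y ^ (k - 1))) atTop
      (𝓝 (1 / (k - 1)!)) := by
  obtain ⟨j, rfl⟩ : ∃ j, k = j + 2 := ⟨k - 2, by omega⟩
  rw [tendsto_iff_norm_sub_tendsto_zero]
  refine squeeze_zero' (Eventually.of_forall fun _ => norm_nonneg _) ?_
    (tendsto_const_nhds.div_atTop tendsto_log_atTop :
      Tendsto (fun y => (j + 2) * 2 ^ j / log y) _ _)
  filter_upwards [eventually_ge_atTop (exp 1)] with y hy
  have hlog : 1 ≤ log y := by rwa [le_log_iff_exp_le (by linarith [add_one_le_exp 1])]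
  have hy1 : 1 ≤ y := by linarith [add_one_le_exp 1]
  have hyL : 0 < y * log y ^ (j + 1) := by positivity
  have herr := abs_divisorSummatory_sub_le (j := j + 1) (by omega) hy1
  have hpow : (1 + log y) ^ j ≤ (2 * log y) ^ j := by gcongr; linarith
  rw [Real.norm_eq_abs, show j + 2 - 1 = j + 1 by omega,
    show (divisorSummatory (j + 2) ⌊y⌋₊ : ℝ) / (y * log y ^ (j + 1)) - 1 / (j + 1)! =
      ((divisorSummatory (j + 2) ⌊y⌋₊ : ℝ) - y * log y ^ (j + 1) / (j + 1)!) / (y * log y ^ (j + 1))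
      by field_simp,
    abs_div, abs_of_pos hyL, div_le_div_iff₀ hyL (by positivity)]
  push_cast at herr
  calc _ ≤ (j + 1 + 1) * y * (1 + log y) ^ j * log y := by gcongr
    _ ≤ (j + 1 + 1) * y * (2 * log y) ^ j * log y := by gcongr
    _ = _ := by ring

lemma tendsto_log_div_const_div_log {c : ℝ} (hc : 0 < c) :
    Tendsto (fun x => log (x / c) / log x) atTop (𝓝 1) := by
  have h : Tendsto (fun x => 1 - log c / log x) atTop (𝓝 (1 - 0)) :=
    tendsto_const_nhds.sub (tendsto_const_nhds.div_atTop tendsto_log_atTop)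
  rw [sub_zero] at h
  refine h.congr' ?_
  filter_upwards [eventually_gt_atTop 1] with x hx
  have hlog := (log_pos hx).ne'
  rw [log_div (by linarith) hc.ne']
  field_simp

lemma tendsto_divisorSummatory_floor_div_div {k : ℕ} (hk : 2 ≤ k) {c : ℝ} (hc : 0 < c) :
    Tendsto (fun x => (divisorSummatory k ⌊x / c⌋₊ : ℝ) / (x * log x ^ (k - 1))) atTop
      (𝓝 (1 / (c * (k - 1)!))) := by
  have h := (((tendsto_divisorSummatory_div hk).comp (tendsto_id.atTop_div_const hc)).mul
    ((tendsto_log_div_const_div_log hc).pow (k - 1))).div_const c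
  rw [one_pow, mul_one, div_div, mul_comm] at h
  refine h.congr' ?_
  filter_upwards [eventually_gt_atTop (max 1 c)] with x hx
  have hx1 : 1 < x := (le_max_left _ _).trans_lt hx
  have hlx := (log_pos hx1).ne'
  have hlxc := (log_pos ((one_lt_div hc).mpr ((le_max_right _ _).trans_lt hx))).ne'
  have hc0 := hc.ne'
  have hx0 : x ≠ 0 := by linarith
  simp only [Function.comp_apply, id, div_pow]
  field_simp

lemma divisorSummatory_floor_div_div_le {k : ℕ} (hk : 2 ≤ k) {x c : ℝ} (hx : exp 1 ≤ x)
    (hc : 1 ≤ c) :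
    (divisorSummatory k ⌊x / c⌋₊ : ℝ) / (x * log x ^ (k - 1)) ≤ (k + 1) * 2 ^ (k - 1) / c := by
  have hlog : 1 ≤ log x := by rwa [le_log_iff_exp_le (by linarith [add_one_le_exp 1])]
  have hx0 : 0 < x := by linarith [add_one_le_exp 1]
  have hc0 : 0 < c := by linarith
  rcases lt_or_ge (x / c) 1 with hxc | hxc
  · rw [Nat.floor_eq_zero.mpr hxc, divisorSummatory_zero_right, Nat.cast_zero, zero_div]
    positivity
  have hlogxc : 0 ≤ log (x / c) := log_nonneg hxc
  have hlogle : log (x / c) ≤ log x := log_le_log (by positivity) (div_le_self hx0.le hc)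
  rw [div_le_div_iff₀ (by positivity) hc0]
  calc _ ≤ (k + 1) * (x / c) * (1 + log (x / c)) ^ (k - 1) * c := by
        gcongr; exact divisorSummatory_le hk hxc
    _ ≤ (k + 1) * (x / c) * (2 * log x) ^ (k - 1) * c := by gcongr; linarith
    _ = _ := by field_simp; ring

lemma tendsto_tsum_mul_divisorSummatory {k : ℕ} (hk : 2 ≤ k) {g : ℕ → ℂ}
    (hg : Summable fun d => ‖g d‖ / (d : ℝ) ^ k) :
    Tendsto (fun x : ℝ => (∑' d, g d * divisorSummatory k (⌊x⌋₊ / d ^ k)) /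
        ((x * log x ^ (k - 1) : ℝ) : ℂ))
      atTop (𝓝 ((∑' d, g d / (d : ℂ) ^ k) / (k - 1)!)) := by
  have hfloor (x : ℝ) (d : ℕ) : ⌊x⌋₊ / d ^ k = ⌊x / (d : ℝ) ^ k⌋₊ := by
    rw [← Nat.cast_pow, Nat.floor_div_natCast]
  rw [← tsum_div_const]
  refine (tendsto_tsum_of_dominated_convergence (hg.mul_left (((k : ℝ) + 1) * 2 ^ (k - 1)))
    (f := fun x d => g d *
      (((divisorSummatory k (⌊x⌋₊ / d ^ k) : ℝ) / (x * log x ^ (k - 1)) : ℝ) : ℂ))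
    (fun d => ?_) ?_).congr fun x => ?_
  · rcases Nat.eq_zero_or_pos d with rfl | hd
    · simp [zero_pow (by omega : k ≠ 0)]
    have := (tendsto_divisorSummatory_floor_div_div hk (c := (d : ℝ) ^ k) (by positivity)).ofReal
    simp_rw [hfloor]
    convert this.const_mul (g d) using 2
    push_cast
    field_simp
  · filter_upwards [eventually_ge_atTop (exp 1)] with x hx d
    rcases Nat.eq_zero_or_pos d with rfl | hd
    · simp [zero_pow (by omega : k ≠ 0)]
    have hx0 : 0 ≤ x := by linarith [exp_pos 1]
    have hlog : 0 ≤ log x := log_nonneg (by linarith [add_one_le_exp 1])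
    rw [norm_mul, Complex.norm_real, Real.norm_of_nonneg (by positivity), hfloor]
    calc _ ≤ ‖g d‖ * ((k + 1) * 2 ^ (k - 1) / (d : ℝ) ^ k) := by
          exact mul_le_mul_of_nonneg_left
            (divisorSummatory_floor_div_div_le hk hx (one_le_pow₀ (Nat.one_le_cast.mpr hd)))
            (norm_nonneg _)
      _ = _ := by ring
  · rw [← tsum_div_const]
    exact tsum_congr fun d => by push_cast; ring

/-! ## Dirichlet series -/

open scoped LSeries.notation ArithmeticFunction.Moebius

lemma LSeries.norm_term_natCast (f : ℕ → ℂ) {k : ℕ} (hk : k ≠ 0) (n : ℕ) :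
    ‖LSeries.term f k n‖ = ‖f n‖ / (n : ℝ) ^ k := by
  rw [LSeries.norm_term_eq]
  rcases eq_or_ne n 0 with rfl | hn
  · simp [hk]
  · simp [hn]

lemma LSeriesSummable_natCast_iff {f : ℕ → ℂ} {k : ℕ} (hk : k ≠ 0) :
    LSeriesSummable f k ↔ Summable fun n => ‖f n‖ / (n : ℝ) ^ k := by
  rw [LSeriesSummable, ← summable_norm_iff]
  simp_rw [LSeries.norm_term_natCast f hk]

lemma LSeries_natCast_eq_tsum (f : ℕ → ℂ) {k : ℕ} (hk : k ≠ 0) :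
    LSeries f k = ∑' n, f n / (n : ℂ) ^ k := by
  simp_rw [LSeries, LSeries.term_of_ne_zero' (Nat.cast_ne_zero.mpr hk), Complex.cpow_natCast]

lemma LSeries_moebius_convolution {f : ℕ → ℂ} {s : ℂ} (hs : 1 < s.re) (hf : LSeriesSummable f s) :
    LSeries (↗μ ⍟ f) s = LSeries f s / riemannZeta s := by
  have hμ : L ↗μ s * riemannZeta s = 1 := by
    rw [← ArithmeticFunction.LSeries_zeta_eq_riemannZeta hs, mul_comm,
      ArithmeticFunction.LSeries_zeta_mul_Lseries_moebius hs]
  rw [LSeries_convolution' (ArithmeticFunction.LSeriesSummable_moebius_iff.mpr hs) hf,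
    eq_div_iff (riemannZeta_ne_zero_of_one_lt_re hs), mul_right_comm, hμ, one_mul]

lemma sum_divisors_moebius_convolution (f : ℕ → ℂ) {n : ℕ} (hn : 0 < n) :
    ∑ d ∈ n.divisors, (↗μ ⍟ f) d = f n := by
  refine ArithmeticFunction.sum_eq_iff_sum_mul_moebius_eq.mpr (fun m _ => ?_) n hn
  rw [LSeries.convolution_def]

lemma sum_tuplesProd_gcd_eq_tsum {k : ℕ} (hk : k ≠ 0) (f : ℕ → ℂ) (N : ℕ) :
    ∑ n ∈ Icc 1 N, ∑ v ∈ tuplesProd k n, f (univ.gcd v) =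
      ∑' d, (↗μ ⍟ f) d * divisorSummatory k (N / d ^ k) := by
  rw [← sum_tuplesProdLE, sum_gcd_eq_sum_smul hk
    (fun n hn => (sum_divisors_moebius_convolution f hn).symm)]
  rw [tsum_eq_sum (s := Icc 1 N)]
  · exact sum_congr rfl fun d _ => by rw [nsmul_eq_mul, mul_comm]
  intro d hd
  rcases Nat.eq_zero_or_pos d with rfl | hd0
  · simp
  · have : N < d ^ k := (by simp at hd; omega : N < d).trans_le (Nat.le_self_pow hk d)
    simp [Nat.div_eq_of_lt this]

theorem hyperbolic_wintner_gcd (k : ℕ) (hk : 2 ≤ k) (f : ℕ → ℂ)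
    (hf : Summable fun n : ℕ => ‖f n‖ / (n : ℝ) ^ k) :
    Tendsto (fun x : ℝ =>
        (∑ n ∈ Finset.Icc 1 ⌊x⌋₊, ∑ v ∈ tuplesProd k n, f (Finset.univ.gcd v)) /
          ((x * Real.log x ^ (k - 1) : ℝ) : ℂ))
      atTop
      (nhds ((1 / ((Nat.factorial (k - 1) : ℂ) * riemannZeta k)) *
        ∑' n : ℕ, f n / (n : ℂ) ^ k)) := by
  have hk0 : k ≠ 0 := by omega
  have hs : 1 < (k : ℂ).re := by simp only [Complex.natCast_re]; exact_mod_cast hk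
  have hfL : LSeriesSummable f k := (LSeriesSummable_natCast_iff hk0).mpr hf
  have hgL := (ArithmeticFunction.LSeriesSummable_moebius_iff.mpr hs).convolution hfL
  simp_rw [sum_tuplesProd_gcd_eq_tsum hk0]
  convert tendsto_tsum_mul_divisorSummatory hk ((LSeriesSummable_natCast_iff hk0).mp hgL) using 2
  rw [← LSeries_natCast_eq_tsum f hk0, ← LSeries_natCast_eq_tsum (↗μ ⍟ f) hk0,
    LSeries_moebius_convolution hs hfL]
  ring
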